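/- Let A and B be events on a probability space with P(Aᶜ) ≤ α₁ and P(Bᶜ) ≤ α₁'. Suppose on A ∩ B: h(k̄, x̄_{k̄}) ≤ h(k̄, x̄*) holds, and the selection and estimation errors satisfy ĥ_{k̄} ≤ ĥ_{k*}, |ĥ_k - ĥ_i - (h_k - h_i)| ≤ ε₁' for all pairs, and h_k - h*_k ≤ ε₁ for all k. Then with probability at least 1 - α₁ - α₁', the selected system k̄ = argmin_k ĥ_k satisfies h(k̄, x*_{k̄}) ≤ h(k*, x*_{k*}) + ε₁ + ε₁'. -/
import Mathlib


open MeasureTheory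

theorem direct_approach_validity {Ω : Type*} [MeasurableSpace Ω]
    (P : Measure Ω) [IsProbabilityMeasure P]
    (K : ℕ) (hK : 0 < K)
    (h hstar : Fin K → ℝ) (hhat : Fin K → Ω → ℝ)
    (α₁ α₁' ε₁ ε₁' : ℝ) (hα₁ : 0 ≤ α₁) (hα₁' : 0 ≤ α₁')
    (hε₁ : 0 ≤ ε₁) (hε₁' : 0 ≤ ε₁')
    (A B : Set Ω)
    (hA : P Aᶜ ≤ ENNReal.ofReal α₁)
    (hB : P Bᶜ ≤ ENNReal.ofReal α₁')
    -- x*_k minimizes, so h*_k ≤ h_k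
    (hopt : ∀ k, hstar k ≤ h k)
    -- on A, the lower-level optimization error is within ε₁
    (hA_tol : ∀ ω ∈ A, ∀ k, h k ≤ hstar k + ε₁)
    -- on B, pairwise estimation errors are within ε₁'
    (hB_tol : ∀ ω ∈ B, ∀ i k, |hhat k ω - hhat i ω - (h k - h i)| ≤ ε₁')
    (kstar : Fin K) (hkstar : ∀ k, hstar kstar ≤ hstar k)
    (kbar : Ω → Fin K) (hkbar : ∀ ω k, hhat (kbar ω) ω ≤ hhat k ω) :
    1 - ENNReal.ofReal (α₁ + α₁')
      ≤ P {ω | hstar (kbar ω) ≤ hstar kstar + (ε₁ + ε₁')} := by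
  have hsub : A ∩ B ⊆ {ω | hstar (kbar ω) ≤ hstar kstar + (ε₁ + ε₁')} := by
    rintro ω ⟨hωA, hωB⟩
    have hest := hB_tol ω hωB kstar (kbar ω)
    have h1 : h (kbar ω) - h kstar ≤ (hhat (kbar ω) ω - hhat kstar ω) + ε₁' := by
      have := abs_le.mp hest
      linarith [this.1]
    have h2 : hhat (kbar ω) ω - hhat kstar ω ≤ 0 := by linarith [hkbar ω kstar]
    have h3 := hA_tol ω hωA kstar
    have h4 := hopt (kbar ω)
    simp only [Set.mem_setOf_eq]
    linarith
  have hle : P {ω | hstar (kbar ω) ≤ hstar kstar + (ε₁ + ε₁')} ≥ P (A ∩ B) :=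
    measure_mono hsub
  refine le_trans ?_ hle
  have hcompl : P (A ∩ B)ᶜ ≤ ENNReal.ofReal (α₁ + α₁') := by
    rw [Set.compl_inter, ENNReal.ofReal_add hα₁ hα₁']
    exact le_trans (measure_union_le _ _) (add_le_add hA hB)
  calc 1 - ENNReal.ofReal (α₁ + α₁') ≤ 1 - P (A ∩ B)ᶜ := tsub_le_tsub_left hcompl 1
    _ ≤ P (A ∩ B) := by
      rw [tsub_le_iff_left]
      calc (1 : ENNReal) = P Set.univ := (measure_univ).symm
        _ = P ((A ∩ B) ∪ (A ∩ B)ᶜ) := by rw [Set.union_compl_self]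
        _ ≤ P (A ∩ B) + P (A ∩ B)ᶜ := measure_union_le _ _
        _ = P (A ∩ B)ᶜ + P (A ∩ B) := add_comm _ _
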